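/- arXiv:2505.19180 — 2 statements merged into one kernel-verified Lean document; each statement's English description precedes it below -/
import Mathlib

section
/- Let Ω ⊆ EuclideanSpace ℝ (Fin 3) be a compact set and ρ : EuclideanSpace ℝ (Fin 3) → ℝ a bounded measurable function vanishing outside Ω. Define the Newton potential N_ρ(x) = −(1/4π) ∫_Ω ρ(y)/‖x−y‖ dy. Then for every x ∉ Ω, N_ρ is twice differentiable at x and harmonic there: ΔN_ρ(x) = 0. -/
/-!
Near a point `x ∉ Ω` the integrand `ρ y / ‖w - y‖` is a smooth function of `w` whose derivatives
of every order are bounded uniformly in `y ∈ Ω`, because `w - y` stays in a compact set avoiding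
`0`. So `N` may be differentiated under the integral sign as often as we like, and `Δ N (x)` is the
integral of `ρ y` against `Δ (‖·‖⁻¹) (x - y)`. That vanishes: the Hessian of `‖z‖⁻¹` is
`‖z‖⁻⁵ (3 z zᵀ - ‖z‖² I)`, whose trace is `0` in dimension three.
-/

open MeasureTheory BigOperators Real

/-- The Laplacian of `f : ℝ³ → ℝ` at `x`, as the sum of second partial derivatives
along the standard coordinate directions. -/
noncomputable def lap (f : EuclideanSpace ℝ (Fin 3) → ℝ) (x : EuclideanSpace ℝ (Fin 3)) : ℝ :=
  ∑ i : Fin 3,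
    fderiv ℝ (fun y => fderiv ℝ f y (EuclideanSpace.single i (1 : ℝ))) x
      (EuclideanSpace.single i (1 : ℝ))

open Filter Metric Set Topology
open scoped Pointwise ContDiff

universe u

theorem IsOpen.setOf_forall_sub_mem {G : Type*} [AddGroup G] [TopologicalSpace G]
    [IsTopologicalAddGroup G] {Ω U : Set G} (hU : IsOpen U) (hΩ : IsCompact Ω) :
    IsOpen {w | ∀ y ∈ Ω, w - y ∈ U} := by
  have : {w | ∀ y ∈ Ω, w - y ∈ U}ᶜ = Uᶜ + Ω := by
    ext w
    simp only [mem_compl_iff, mem_ofPred_eq, not_forall, exists_prop, Set.mem_add]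
    exact ⟨fun ⟨y, hy, hwy⟩ => ⟨w - y, hwy, y, hy, sub_add_cancel w y⟩,
      fun ⟨z, hz, y, hy, hzy⟩ => ⟨y, hy, by rwa [← hzy, add_sub_cancel_right]⟩⟩
  rw [← isClosed_compl_iff, this]
  exact hU.isClosed_compl.add_right_of_isCompact hΩ

section KernelPotential

-- One universe for `E` and `F`, so that the induction in `contDiffAt_kernelPotential` can pass
-- from `F` to `E →L[ℝ] F`.
variable {E F : Type u} [NormedAddCommGroup E] [MeasurableSpace E] [BorelSpace E]
  [NormedAddCommGroup F] [NormedSpace ℝ F]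
  {μ : Measure E} {Ω U : Set E} {ρ : E → ℝ} {K : E → F} {M : ℝ} {x : E}

noncomputable def kernelPotential (μ : Measure E) (Ω : Set E) (ρ : E → ℝ) (K : E → F) (w : E) :
    F :=
  ∫ y in Ω, ρ y • K (w - y) ∂μ

theorem integrableOn_smul_comp_sub [IsFiniteMeasureOnCompacts μ] (hK : ContinuousOn K U)
    (hΩ : IsCompact Ω) (hρ : Measurable ρ) (hρM : ∀ y ∈ Ω, |ρ y| ≤ M)
    (hx : ∀ y ∈ Ω, x - y ∈ U) : IntegrableOn (fun y => ρ y • K (x - y)) Ω μ := by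
  have hKΩ : IntegrableOn (fun y => K (x - y)) Ω μ :=
    (hK.comp (by fun_prop) hx).integrableOn_compact hΩ
  exact hKΩ.bdd_smul M hρ.aestronglyMeasurable
    ((ae_restrict_iff' hΩ.measurableSet).mpr (Eventually.of_forall hρM))

variable [NormedSpace ℝ E] [ProperSpace E] [IsFiniteMeasureOnCompacts μ]

theorem hasFDerivAt_kernelPotential (hU : IsOpen U) (hK : ContDiffOn ℝ 1 K U)
    (hΩ : IsCompact Ω) (hρ : Measurable ρ) (hρM : ∀ y ∈ Ω, |ρ y| ≤ M)
    (hx : ∀ y ∈ Ω, x - y ∈ U) :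
    HasFDerivAt (kernelPotential μ Ω ρ K) (kernelPotential μ Ω ρ (fderiv ℝ K) x) x := by
  have hV := hU.setOf_forall_sub_mem hΩ
  have hK' := hK.continuousOn_fderiv_of_isOpen hU le_rfl
  obtain ⟨δ, hδ, hδV⟩ := nhds_basis_closedBall.mem_iff.mp (hV.mem_nhds hx)
  obtain ⟨B, hB⟩ := ((isCompact_closedBall x δ).prod hΩ).exists_bound_of_continuousOn
    (hK'.comp (f := fun p : E × E => p.1 - p.2) (by fun_prop) fun p hp => hδV hp.1 p.2 hp.2)
  refine hasFDerivAt_integral_of_dominated_of_fderiv_le (F := fun w y => ρ y • K (w - y))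
    (F' := fun w y => ρ y • fderiv ℝ K (w - y)) (bound := fun _ => M * B) (ball_mem_nhds x hδ)
    ?_ (integrableOn_smul_comp_sub hK.continuousOn hΩ hρ hρM hx)
    (integrableOn_smul_comp_sub hK' hΩ hρ hρM hx).1 ?_ (integrableOn_const hΩ.measure_ne_top) ?_
  · filter_upwards [hV.mem_nhds hx] with w hw
    exact (integrableOn_smul_comp_sub hK.continuousOn hΩ hρ hρM hw).1
  · refine ae_restrict_of_forall_mem hΩ.measurableSet fun y hy w hw => ?_
    rw [norm_smul, Real.norm_eq_abs]
    exact mul_le_mul (hρM y hy) (hB (w, y) ⟨ball_subset_closedBall hw, hy⟩) (norm_nonneg _)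
      ((abs_nonneg _).trans (hρM y hy))
  · refine ae_restrict_of_forall_mem hΩ.measurableSet fun y hy w hw => ?_
    have hKw := ((hK.differentiableOn one_ne_zero).differentiableAt
      (hU.mem_nhds (hδV (ball_subset_closedBall hw) y hy))).hasFDerivAt
    have := (hKw.comp w (hasFDerivAt_sub_const y)).const_smul (ρ y)
    rwa [ContinuousLinearMap.comp_id] at this

theorem contDiffAt_kernelPotential (hU : IsOpen U) (hK : ContDiffOn ℝ ∞ K U)
    (hΩ : IsCompact Ω) (hρ : Measurable ρ) (hρM : ∀ y ∈ Ω, |ρ y| ≤ M)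
    (hx : ∀ y ∈ Ω, x - y ∈ U) (n : ℕ) :
    ContDiffAt ℝ n (kernelPotential μ Ω ρ K) x := by
  have hV := (hU.setOf_forall_sub_mem hΩ).mem_nhds hx
  induction n generalizing F with
  | zero =>
    refine contDiffAt_zero.mpr ⟨_, hV, fun w hw => ?_⟩
    exact (hasFDerivAt_kernelPotential hU (hK.of_le (by norm_cast)) hΩ hρ hρM hw).continuousAt
      |>.continuousWithinAt
  | succ n ih =>
    rw [Nat.cast_succ, contDiffAt_succ_iff_hasFDerivAt]
    exact ⟨_, ⟨_, hV, fun w hw =>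
      hasFDerivAt_kernelPotential hU (hK.of_le (by norm_cast)) hΩ hρ hρM hw⟩,
      ih (hK.fderiv_of_isOpen hU (by norm_cast))⟩

end KernelPotential

theorem inv_norm_eq_rpow {E : Type*} [SeminormedAddGroup E] (z : E) :
    ‖z‖⁻¹ = (‖z‖ ^ 2) ^ (-2⁻¹ : ℝ) := by
  rw [← Real.rpow_natCast, ← Real.rpow_mul (norm_nonneg z)]
  norm_num [Real.rpow_neg_one]

section InverseNorm

variable {E : Type*} [NormedAddCommGroup E] [InnerProductSpace ℝ E]

theorem contDiffOn_inv_norm : ContDiffOn ℝ ∞ (fun z : E => ‖z‖⁻¹) {0}ᶜ :=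
  fun _ hz => ((contDiffAt_norm ℝ hz).inv (norm_ne_zero_iff.mpr hz)).contDiffWithinAt

theorem hasFDerivAt_norm_sq_rpow {z : E} (hz : z ≠ 0) (p : ℝ) :
    HasFDerivAt (fun z : E => (‖z‖ ^ 2) ^ p) ((2 * p * (‖z‖ ^ 2) ^ (p - 1)) • innerSL ℝ z) z := by
  have h := (hasStrictFDerivAt_norm_sq z).hasFDerivAt.rpow_const (p := p)
    (Or.inl (by positivity))
  convert h using 1
  ext v
  simp only [FunLike.coe_smul, Pi.smul_apply, smul_eq_mul, two_nsmul,
    add_apply, innerSL_apply_apply]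
  ring

theorem hasFDerivAt_inv_norm {z : E} (hz : z ≠ 0) :
    HasFDerivAt (fun z : E => ‖z‖⁻¹) (-(‖z‖ ^ 2) ^ (-(3 / 2) : ℝ) • innerSL ℝ z) z := by
  simp_rw [inv_norm_eq_rpow]
  convert hasFDerivAt_norm_sq_rpow hz (-2⁻¹) using 2
  norm_num

theorem fderiv_fderiv_inv_norm_apply {z : E} (hz : z ≠ 0) (v : E) :
    fderiv ℝ (fun y => fderiv ℝ (fun z : E => ‖z‖⁻¹) y v) z v =
      3 * (‖z‖ ^ 2) ^ (-(5 / 2) : ℝ) * inner ℝ z v ^ 2 - (‖z‖ ^ 2) ^ (-(3 / 2) : ℝ) * ‖v‖ ^ 2 := by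
  have hD1 : (fun y => fderiv ℝ (fun z : E => ‖z‖⁻¹) y v) =ᶠ[𝓝 z]
      fun y => -(‖y‖ ^ 2) ^ (-(3 / 2) : ℝ) * innerSL ℝ v y :=
    (eventually_ne_nhds hz).mono fun y hy => by
      dsimp only
      rw [(hasFDerivAt_inv_norm hy).fderiv]
      simp [real_inner_comm]
  have hD2 : HasFDerivAt (fun y => -(‖y‖ ^ 2) ^ (-(3 / 2) : ℝ) * innerSL ℝ v y) _ z :=
    (hasFDerivAt_norm_sq_rpow hz (-(3 / 2))).neg.mul (innerSL ℝ v).hasFDerivAt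
  rw [hD1.fderiv_eq, hD2.fderiv]
  simp only [Pi.neg_apply, neg_smul, coe_innerSL_apply, real_inner_comm, mul_neg, neg_mul,
    neg_neg, add_apply, neg_apply, smul_apply, inner_self_eq_norm_sq_to_K, ringHom_apply,
    smul_eq_mul]
  ring_nf

end InverseNorm

local notation "ℝ³" => EuclideanSpace ℝ (Fin 3)

noncomputable def hessianTrace : (ℝ³ →L[ℝ] ℝ³ →L[ℝ] ℝ) →L[ℝ] ℝ :=
  ∑ i : Fin 3, (ContinuousLinearMap.apply ℝ ℝ (EuclideanSpace.single i 1)).comp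
    (ContinuousLinearMap.apply ℝ (ℝ³ →L[ℝ] ℝ) (EuclideanSpace.single i 1))

theorem hessianTrace_apply (B : ℝ³ →L[ℝ] ℝ³ →L[ℝ] ℝ) :
    hessianTrace B = ∑ i : Fin 3, B (EuclideanSpace.single i 1) (EuclideanSpace.single i 1) := by
  simp [hessianTrace]

theorem lap_eq_hessianTrace {f : ℝ³ → ℝ} {x : ℝ³} (hf : DifferentiableAt ℝ (fderiv ℝ f) x) :
    lap f x = hessianTrace (fderiv ℝ (fderiv ℝ f) x) := by
  simp [lap, hessianTrace_apply, fderiv_clm_apply hf (differentiableAt_const _)]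

theorem lap_inv_norm {z : ℝ³} (hz : z ≠ 0) : lap (fun z => ‖z‖⁻¹) z = 0 := by
  simp only [lap, fderiv_fderiv_inv_norm_apply hz, EuclideanSpace.inner_single_right,
    PiLp.norm_single, ringHom_apply, one_mul, norm_one, one_pow, mul_one, Finset.sum_sub_distrib,
    Finset.sum_const, Finset.card_univ, Fintype.card_fin, nsmul_eq_mul, Nat.cast_ofNat]
  rw [← Finset.mul_sum, ← EuclideanSpace.real_norm_sq_eq,
    show (-(3 / 2) : ℝ) = -(5 / 2) + 1 by norm_num, Real.rpow_add_one (by positivity)]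
  ring

theorem lap_kernelPotential {Ω U : Set ℝ³} {ρ : ℝ³ → ℝ} {K : ℝ³ → ℝ} {M : ℝ} {x : ℝ³}
    {μ : Measure ℝ³} [IsFiniteMeasureOnCompacts μ] (hU : IsOpen U) (hK : ContDiffOn ℝ 2 K U)
    (hΩ : IsCompact Ω) (hρ : Measurable ρ) (hρM : ∀ y ∈ Ω, |ρ y| ≤ M)
    (hx : ∀ y ∈ Ω, x - y ∈ U) :
    lap (kernelPotential μ Ω ρ K) x = ∫ y in Ω, ρ y * lap K (x - y) ∂μ := by
  have hK' : ContDiffOn ℝ 1 (fderiv ℝ K) U := hK.fderiv_of_isOpen hU (by norm_num)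
  have hD1 : fderiv ℝ (kernelPotential μ Ω ρ K) =ᶠ[𝓝 x] kernelPotential μ Ω ρ (fderiv ℝ K) := by
    filter_upwards [(hU.setOf_forall_sub_mem hΩ).mem_nhds hx] with w hw
    exact (hasFDerivAt_kernelPotential hU (hK.of_le (by norm_num)) hΩ hρ hρM hw).fderiv
  have hD2 := hasFDerivAt_kernelPotential (μ := μ) hU hK' hΩ hρ hρM hx
  rw [lap_eq_hessianTrace (hD2.differentiableAt.congr_of_eventuallyEq hD1), hD1.fderiv_eq,
    hD2.fderiv, kernelPotential,
    ← hessianTrace.integral_comp_comm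
      (integrableOn_smul_comp_sub (hK'.continuousOn_fderiv_of_isOpen hU le_rfl) hΩ hρ hρM hx)]
  refine setIntegral_congr_fun hΩ.measurableSet fun y hy => ?_
  rw [map_smul, smul_eq_mul, lap_eq_hessianTrace]
  exact (hK'.differentiableOn one_ne_zero).differentiableAt (hU.mem_nhds (hx y hy))

theorem newton_potential_harmonic_outside_general
    (Ω : Set (EuclideanSpace ℝ (Fin 3))) (hΩ : IsCompact Ω)
    (ρ : EuclideanSpace ℝ (Fin 3) → ℝ) (hρ : Measurable ρ)
    (M : ℝ) (hρbd : ∀ y, |ρ y| ≤ M)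
    (N : EuclideanSpace ℝ (Fin 3) → ℝ)
    (hN : N = fun x => -(1 / (4 * π)) * ∫ y in Ω, ρ y / ‖x - y‖)
    (x : EuclideanSpace ℝ (Fin 3)) (hx : x ∉ Ω) :
    ContDiffAt ℝ 2 N x ∧ lap N x = 0 := by
  set c := -(1 / (4 * π))
  have hN' : N = kernelPotential volume Ω (fun y => c * ρ y) fun z => ‖z‖⁻¹ := by
    ext w
    simp only [hN, kernelPotential, ← integral_const_mul, smul_eq_mul, div_eq_mul_inv, mul_assoc]
  have hcρ : Measurable fun y => c * ρ y := hρ.const_mul c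
  have hcρM : ∀ y ∈ Ω, |c * ρ y| ≤ |c| * M := fun y _ => by
    rw [abs_mul]
    exact mul_le_mul_of_nonneg_left (hρbd y) (abs_nonneg c)
  have hxΩ : ∀ y ∈ Ω, x - y ∈ ({0}ᶜ : Set ℝ³) := fun y hy =>
    sub_ne_zero.mpr (ne_of_mem_of_not_mem hy hx).symm
  subst hN'
  refine ⟨contDiffAt_kernelPotential isOpen_compl_singleton contDiffOn_inv_norm hΩ hcρ hcρM hxΩ 2,
    ?_⟩
  rw [lap_kernelPotential isOpen_compl_singleton (contDiffOn_inv_norm.of_le (by norm_cast)) hΩ hcρ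
    hcρM hxΩ]
  exact setIntegral_eq_zero_of_forall_eq_zero fun y hy => by
    rw [lap_inv_norm (hxΩ y hy), mul_zero]

theorem newton_potential_harmonic_outside
    (Ω : Set (EuclideanSpace ℝ (Fin 3))) (hΩ : IsCompact Ω)
    (ρ : EuclideanSpace ℝ (Fin 3) → ℝ) (hρ : Measurable ρ)
    (M : ℝ) (hρbd : ∀ y, |ρ y| ≤ M)
    (hρ0 : ∀ y ∉ Ω, ρ y = 0)
    (N : EuclideanSpace ℝ (Fin 3) → ℝ)
    (hN : N = fun x => -(1 / (4 * π)) * ∫ y in Ω, ρ y / ‖x - y‖)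
    (x : EuclideanSpace ℝ (Fin 3)) (hx : x ∉ Ω) :
    ContDiffAt ℝ 2 N x ∧ lap N x = 0 :=
  newton_potential_harmonic_outside_general Ω hΩ ρ hρ M hρbd N hN x hx
end

section
/- Let Ω ⊆ EuclideanSpace ℝ (Fin 3) be a compact set and m : EuclideanSpace ℝ (Fin 3) → EuclideanSpace ℝ (Fin 3) a bounded measurable vector field vanishing outside Ω. For x ∉ Ω, define the vector Newton potential componentwise by (∫_Ω m(y)/‖x−y‖ dy) ∈ EuclideanSpace ℝ (Fin 3). Then for every x ∉ Ω, this vector field is differentiable at x and its divergence satisfies ∇_x · ∫_Ω m(y)/‖x−y‖ dy = −∫_Ω ⟨m(y), (x−y)/‖x−y‖³⟩ dy. Consequently the two representations of the magnetic scalar potential, φ(x) = (1/4π) ∫_Ω ⟨m(y), (x−y)⟩/‖x−y‖³ dy and φ(x) = −(1/4π) ∇_x · ∫_Ω m(y)/‖x−y‖ dy, agree at every x ∉ Ω. -/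
/-!
For `x` at positive distance from `Ω`, the kernel `z ↦ ‖z - y‖⁻¹` is differentiable near `x` with
derivative `-(‖z - y‖³)⁻¹ ⟪z - y, ·⟫`, of norm `‖z - y‖⁻²`, bounded uniformly for `z` near `x` and
`y ∈ Ω`. Dominated convergence therefore lets us differentiate the vector potential under the
integral sign. Its divergence is the trace of its derivative; the trace commutes with the integral,
and the trace of the rank-one map `v ↦ -(‖z - y‖³)⁻¹ ⟪z - y, v⟫ m y` is
`-⟪m y, (‖z - y‖³)⁻¹ (z - y)⟫`.
-/

open MeasureTheory Real
open scoped RealInnerProductSpace ENNReal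

section Kernel

variable {E F : Type*} [NormedAddCommGroup E] [InnerProductSpace ℝ E]
  [NormedAddCommGroup F] [NormedSpace ℝ F]

theorem hasFDerivAt_norm_of_ne_zero {v : E} (hv : v ≠ 0) :
    HasFDerivAt (‖·‖) (‖v‖⁻¹ • innerSL ℝ v) v := by
  have hv' : ‖v‖ ≠ 0 := norm_ne_zero_iff.mpr hv
  have hsqrt := (hasStrictFDerivAt_norm_sq v).hasFDerivAt.sqrt (pow_ne_zero 2 hv')
  have hcoeff : (1 / (2 * ‖v‖)) • (2 • innerSL ℝ v) = ‖v‖⁻¹ • innerSL ℝ v := by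
    rw [two_nsmul, ← two_smul ℝ, smul_smul]
    congr 1
    field_simp
  simpa only [sqrt_sq_eq_abs, abs_norm, hcoeff] using hsqrt

theorem hasFDerivAt_inv_norm_sub {y z : E} (h : z ≠ y) :
    HasFDerivAt (fun w => ‖w - y‖⁻¹) (-(‖z - y‖ ^ 3)⁻¹ • innerSL ℝ (z - y)) z := by
  have hzy : ‖z - y‖ ≠ 0 := norm_ne_zero_iff.mpr (sub_ne_zero.mpr h)
  have hnorm : HasFDerivAt (fun w => ‖w - y‖) (‖z - y‖⁻¹ • innerSL ℝ (z - y)) z :=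
    ((hasFDerivAt_norm_of_ne_zero (sub_ne_zero.mpr h)).comp z ((hasFDerivAt_id z).sub_const y) :)
  have hcoeff : -(‖z - y‖ ^ 2)⁻¹ • ‖z - y‖⁻¹ • innerSL ℝ (z - y) =
      -(‖z - y‖ ^ 3)⁻¹ • innerSL ℝ (z - y) := by
    rw [smul_smul]
    congr 1
    field_simp
  have := (hasDerivAt_inv hzy).comp_hasFDerivAt z hnorm
  rwa [hcoeff] at this

noncomputable def newtonKernelFDeriv (z y : E) (u : F) : E →L[ℝ] F :=
  (-(‖z - y‖ ^ 3)⁻¹ • innerSL ℝ (z - y)).smulRight u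

theorem hasFDerivAt_newtonKernel {y z : E} (h : z ≠ y) (u : F) :
    HasFDerivAt (fun w => ‖w - y‖⁻¹ • u) (newtonKernelFDeriv z y u) z :=
  (hasFDerivAt_inv_norm_sub h).smul_const u

theorem norm_newtonKernelFDeriv_le {z y : E} {u : F} {δ M : ℝ} (hδ : 0 < δ) (hzy : δ ≤ dist z y)
    (hu : ‖u‖ ≤ M) : ‖newtonKernelFDeriv z y u‖ ≤ (δ ^ 2)⁻¹ * M := by
  rw [dist_eq_norm] at hzy
  have hzy' : ‖z - y‖ ≠ 0 := (hδ.trans_le hzy).ne'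
  calc ‖newtonKernelFDeriv z y u‖ = (‖z - y‖ ^ 2)⁻¹ * ‖u‖ := by
        rw [newtonKernelFDeriv, ContinuousLinearMap.norm_smulRight_apply, norm_smul,
          innerSL_apply_norm, norm_neg, norm_inv, norm_pow, norm_norm]
        field_simp
    _ ≤ (δ ^ 2)⁻¹ * M := by gcongr

theorem trace_newtonKernelFDeriv [FiniteDimensional ℝ E] (z y u : E) :
    LinearMap.trace ℝ E (newtonKernelFDeriv z y u) = -⟪u, (‖z - y‖ ^ 3)⁻¹ • (z - y)⟫ := by
  simp only [newtonKernelFDeriv, ContinuousLinearMap.coe_smulRight, LinearMap.trace_smulRight,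
    ContinuousLinearMap.toLinearMap_smul, LinearMap.smul_apply, ContinuousLinearMap.coe_coe,
    innerSL_apply_apply, real_inner_smul_right, real_inner_comm u, smul_eq_mul, neg_mul]

end Kernel

theorem IsClosed.exists_pos_le_dist_of_notMem {X : Type*} [PseudoMetricSpace X] {s : Set X}
    (hs : IsClosed s) {x : X} (hx : x ∉ s) :
    ∃ δ > 0, ∀ z ∈ Metric.ball x δ, ∀ y ∈ s, δ ≤ dist z y := by
  obtain ⟨δ, hδ, hdisj⟩ :=
    (Set.disjoint_singleton_left.mpr hx).exists_thickenings isCompact_singleton hs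
  rw [Metric.thickening_singleton] at hdisj
  refine ⟨δ, hδ, fun z hz y hy => not_lt.mp fun hzy => ?_⟩
  exact hdisj.notMem_of_mem_left hz (Metric.mem_thickening_iff.mpr ⟨y, hy, hzy⟩)

section Integral

variable {E F : Type*} [NormedAddCommGroup E] [InnerProductSpace ℝ E] [MeasurableSpace E]
  [BorelSpace E] [SecondCountableTopology E] [NormedAddCommGroup F] [NormedSpace ℝ F]
  {μ : Measure E} {Ω : Set E} {m : E → F} {M : ℝ} {x : E}

theorem aestronglyMeasurable_newtonKernelFDeriv {ν : Measure E} (hm : AEStronglyMeasurable m ν)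
    (z : E) : AEStronglyMeasurable (fun y => newtonKernelFDeriv z y (m y)) ν := by
  have hcoeff : AEStronglyMeasurable (fun y => -(‖z - y‖ ^ 3)⁻¹ • innerSL ℝ (z - y)) ν :=
    ((continuous_const.sub continuous_id).norm.pow 3).measurable.inv.neg.aestronglyMeasurable.smul
      -- pinning `β` spares a slow search for `SecondCountableTopologyEither`
      (Continuous.aestronglyMeasurable (β := E →L[ℝ] ℝ)
        ((innerSL ℝ).continuous.comp (continuous_const.sub continuous_id)))
  exact (ContinuousLinearMap.smulRightL ℝ E F).aestronglyMeasurable_comp₂ hcoeff hm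

theorem integrableOn_newtonKernelFDeriv (hΩ : IsClosed Ω) (hμΩ : μ Ω ≠ ∞)
    (hm : AEStronglyMeasurable m (μ.restrict Ω)) (hmM : ∀ y ∈ Ω, ‖m y‖ ≤ M) (hx : x ∉ Ω) :
    IntegrableOn (fun y => newtonKernelFDeriv x y (m y)) Ω μ := by
  have := isFiniteMeasure_restrict.mpr hμΩ
  obtain ⟨δ, hδ, hsep⟩ := hΩ.exists_pos_le_dist_of_notMem hx
  refine (integrable_const ((δ ^ 2)⁻¹ * M)).mono' (aestronglyMeasurable_newtonKernelFDeriv hm x) ?_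
  filter_upwards [ae_restrict_mem hΩ.measurableSet] with y hy
  exact norm_newtonKernelFDeriv_le hδ (hsep x (Metric.mem_ball_self hδ) y hy) (hmM y hy)

theorem hasFDerivAt_setIntegral_inv_norm_sub_smul [CompleteSpace F] (hΩ : IsClosed Ω)
    (hμΩ : μ Ω ≠ ∞) (hm : AEStronglyMeasurable m (μ.restrict Ω)) (hmM : ∀ y ∈ Ω, ‖m y‖ ≤ M)
    (hx : x ∉ Ω) :
    HasFDerivAt (fun z => ∫ y in Ω, ‖z - y‖⁻¹ • m y ∂μ)
      (∫ y in Ω, newtonKernelFDeriv x y (m y) ∂μ) x := by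
  have := isFiniteMeasure_restrict.mpr hμΩ
  obtain ⟨δ, hδ, hsep⟩ := hΩ.exists_pos_le_dist_of_notMem hx
  have hmeas (z : E) : AEStronglyMeasurable (fun y => ‖z - y‖⁻¹ • m y) (μ.restrict Ω) :=
    (continuous_const.sub continuous_id).norm.measurable.inv.aestronglyMeasurable.smul hm
  have hint : Integrable (fun y => ‖x - y‖⁻¹ • m y) (μ.restrict Ω) := by
    refine (integrable_const (δ⁻¹ * M)).mono' (hmeas x) ?_
    filter_upwards [ae_restrict_mem hΩ.measurableSet] with y hy
    rw [norm_smul, norm_inv, norm_norm, ← dist_eq_norm]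
    gcongr
    exacts [hsep x (Metric.mem_ball_self hδ) y hy, hmM y hy]
  refine hasFDerivAt_integral_of_dominated_of_fderiv_le
    (F' := fun z y => newtonKernelFDeriv z y (m y)) (Metric.ball_mem_nhds x hδ)
    (.of_forall hmeas) hint (integrableOn_newtonKernelFDeriv hΩ hμΩ hm hmM hx).aestronglyMeasurable
    ?_ (integrable_const ((δ ^ 2)⁻¹ * M)) ?_
  · filter_upwards [ae_restrict_mem hΩ.measurableSet] with y hy z hz
    exact norm_newtonKernelFDeriv_le hδ (hsep z hz y hy) (hmM y hy)
  · filter_upwards [ae_restrict_mem hΩ.measurableSet] with y hy z hz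
    have hzy : z ≠ y := fun hzy => (hsep z hz y hy).not_gt (by simpa [hzy] using hδ)
    exact hasFDerivAt_newtonKernel hzy (m y)

end Integral

theorem trace_integral {α E : Type*} [MeasurableSpace α] {ν : Measure α}
    [NormedAddCommGroup E] [NormedSpace ℝ E] [FiniteDimensional ℝ E] {f : α → E →L[ℝ] E}
    (hf : Integrable f ν) :
    LinearMap.trace ℝ E (∫ a, f a ∂ν : E →L[ℝ] E) = ∫ a, LinearMap.trace ℝ E (f a) ∂ν :=
  ((LinearMap.toContinuousLinearMap
    (LinearMap.trace ℝ E ∘ₗ ContinuousLinearMap.coeLM ℝ)).integral_comp_comm hf).symm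

theorem sum_fderiv_apply_single_eq_trace {ι : Type*} [Fintype ι] [DecidableEq ι]
    {f : EuclideanSpace ℝ ι → EuclideanSpace ℝ ι} {L : EuclideanSpace ℝ ι →L[ℝ] EuclideanSpace ℝ ι}
    {x : EuclideanSpace ℝ ι} (hf : HasFDerivAt f L x) :
    ∑ i, fderiv ℝ (fun z => f z i) x (EuclideanSpace.single i 1) =
      LinearMap.trace ℝ _ (L : EuclideanSpace ℝ ι →ₗ[ℝ] EuclideanSpace ℝ ι) := by
  rw [LinearMap.trace_eq_sum_inner _ (EuclideanSpace.basisFun ι ℝ)]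
  refine Finset.sum_congr rfl fun i _ => ?_
  have hfi : HasFDerivAt (fun z => f z i) ((EuclideanSpace.proj i).comp L) x :=
    (EuclideanSpace.proj (𝕜 := ℝ) i).hasFDerivAt.comp x hf
  rw [hfi.fderiv]
  simp [EuclideanSpace.inner_single_left]

theorem divergence_of_vector_newton_potential_general
    (Ω : Set (EuclideanSpace ℝ (Fin 3))) (hΩ : IsCompact Ω)
    (m : EuclideanSpace ℝ (Fin 3) → EuclideanSpace ℝ (Fin 3)) (hm : Measurable m)
    (M : ℝ) (hmbd : ∀ y, ‖m y‖ ≤ M)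
    (F : EuclideanSpace ℝ (Fin 3) → EuclideanSpace ℝ (Fin 3))
    (hF : F = fun z => ∫ y in Ω, (‖z - y‖)⁻¹ • m y)
    (x : EuclideanSpace ℝ (Fin 3)) (hx : x ∉ Ω) :
    DifferentiableAt ℝ F x ∧
      (∑ i : Fin 3, fderiv ℝ (fun z => F z i) x (EuclideanSpace.single i (1 : ℝ))) =
        -∫ y in Ω, ⟪m y, (‖x - y‖ ^ 3)⁻¹ • (x - y)⟫ ∧
      (1 / (4 * π)) * (∫ y in Ω, ⟪m y, x - y⟫ / ‖x - y‖ ^ 3) =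
        -(1 / (4 * π)) *
          ∑ i : Fin 3, fderiv ℝ (fun z => F z i) x (EuclideanSpace.single i (1 : ℝ)) := by
  subst hF
  have hΩμ : volume Ω ≠ ∞ := hΩ.measure_lt_top.ne
  have hmM : ∀ y ∈ Ω, ‖m y‖ ≤ M := fun y _ => hmbd y
  have hF' := hasFDerivAt_setIntegral_inv_norm_sub_smul hΩ.isClosed hΩμ hm.aestronglyMeasurable
    hmM hx
  have hdiv : ∑ i : Fin 3, fderiv ℝ (fun z => (∫ y in Ω, ‖z - y‖⁻¹ • m y) i) x
      (EuclideanSpace.single i 1) = -∫ y in Ω, ⟪m y, (‖x - y‖ ^ 3)⁻¹ • (x - y)⟫ := by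
    rw [sum_fderiv_apply_single_eq_trace hF', trace_integral
      (integrableOn_newtonKernelFDeriv hΩ.isClosed hΩμ hm.aestronglyMeasurable hmM hx)]
    simp_rw [trace_newtonKernelFDeriv]
    exact integral_neg _
  refine ⟨hF'.differentiableAt, hdiv, ?_⟩
  simp_rw [hdiv, real_inner_smul_right, div_eq_inv_mul]
  ring

theorem divergence_of_vector_newton_potential
    (Ω : Set (EuclideanSpace ℝ (Fin 3))) (hΩ : IsCompact Ω)
    (m : EuclideanSpace ℝ (Fin 3) → EuclideanSpace ℝ (Fin 3)) (hm : Measurable m)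
    (M : ℝ) (hmbd : ∀ y, ‖m y‖ ≤ M)
    (hm0 : ∀ y ∉ Ω, m y = 0)
    (F : EuclideanSpace ℝ (Fin 3) → EuclideanSpace ℝ (Fin 3))
    (hF : F = fun z => ∫ y in Ω, (‖z - y‖)⁻¹ • m y)
    (x : EuclideanSpace ℝ (Fin 3)) (hx : x ∉ Ω) :
    DifferentiableAt ℝ F x ∧
      (∑ i : Fin 3, fderiv ℝ (fun z => F z i) x (EuclideanSpace.single i (1 : ℝ))) =
        -∫ y in Ω, ⟪m y, (‖x - y‖ ^ 3)⁻¹ • (x - y)⟫ ∧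
      (1 / (4 * π)) * (∫ y in Ω, ⟪m y, x - y⟫ / ‖x - y‖ ^ 3) =
        -(1 / (4 * π)) *
          ∑ i : Fin 3, fderiv ℝ (fun z => F z i) x (EuclideanSpace.single i (1 : ℝ)) :=
  divergence_of_vector_newton_potential_general Ω hΩ m hm M hmbd F hF x hx
end
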